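/- Let (B,G,β) be an action of a discrete group G on a C*-algebra B, and for each primitive ideal P ∈ Prim(B) let S_P = {s ∈ G : β_s(P) = P} be its stabilizer under the induced action of G on Prim(B). If ⋂{S_P : P ∈ Prim(B)} = {e}, then the dual coaction β̂ on B×_β G is not weakly induced from any nontrivial quotient of G: there is no nontrivial normal subgroup N of G such that β̂ is weakly induced from G/N. -/

import Mathlib

noncomputable section

open scoped ComplexConjugate
open Function Set Submodule Classical
attribute [local instance] Classical.propDecidable

/-- A bundled (non-unital) C*-algebra. -/
structure CStarAlg : Type 1 where
  carrier : Type
  [inst : NonUnitalCStarAlgebra carrier]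

attribute [instance] CStarAlg.inst

/-- A bundled complex Hilbert space. -/
structure HilbertC : Type 1 where
  carrier : Type
  [instN : NormedAddCommGroup carrier]
  [instI : InnerProductSpace ℂ carrier]
  [instC : CompleteSpace carrier]

attribute [instance] HilbertC.instN HilbertC.instI HilbertC.instC

/-- The C*-algebra of bounded operators on a Hilbert space. -/
abbrev HilbertC.Op (H : HilbertC) : Type := H.carrier →L[ℂ] H.carrier

/-- A Fell bundle (C*-algebraic bundle) over a discrete group `G`:  a family of Banach
spaces `F s` together with bilinear multiplications `F s × F t → F (s*t)` and conjugate
linear involutions `F s → F s⁻¹` satisfying the axioms of a C*-algebraic bundle. -/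
structure FellBundle (G : Type) [Group G] : Type 1 where
  F : G → Type
  [nacg : ∀ s, NormedAddCommGroup (F s)]
  [nsp : ∀ s, NormedSpace ℂ (F s)]
  [cplt : ∀ s, CompleteSpace (F s)]
  mul : ∀ {s t : G}, F s → F t → F (s * t)
  star' : ∀ {s : G}, F s → F s⁻¹
  add_mul' : ∀ {s t : G} (a b : F s) (c : F t), mul (a + b) c = mul a c + mul b c
  mul_add' : ∀ {s t : G} (a : F s) (b c : F t), mul a (b + c) = mul a b + mul a c
  smul_mul' : ∀ {s t : G} (z : ℂ) (a : F s) (b : F t), mul (z • a) b = z • mul a b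
  mul_smul' : ∀ {s t : G} (z : ℂ) (a : F s) (b : F t), mul a (z • b) = z • mul a b
  norm_mul_le' : ∀ {s t : G} (a : F s) (b : F t), ‖mul a b‖ ≤ ‖a‖ * ‖b‖
  mul_assoc' : ∀ {s t u : G} (a : F s) (b : F t) (c : F u),
    HEq (mul (mul a b) c) (mul a (mul b c))
  star_add' : ∀ {s : G} (a b : F s), star' (a + b) = star' a + star' b
  star_smul' : ∀ {s : G} (z : ℂ) (a : F s), star' (z • a) = conj z • star' a
  star_star' : ∀ {s : G} (a : F s), HEq (star' (star' a)) a
  star_mul'' : ∀ {s t : G} (a : F s) (b : F t),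
    HEq (star' (mul a b)) (mul (star' b) (star' a))
  norm_star' : ∀ {s : G} (a : F s), ‖star' a‖ = ‖a‖
  norm_star_mul_self' : ∀ {s : G} (a : F s), ‖mul (star' a) a‖ = ‖a‖ * ‖a‖

attribute [instance] FellBundle.nacg FellBundle.nsp FellBundle.cplt

variable {G : Type} [Group G]

/-- Transport between the fibers of a Fell bundle along an equality of indices. -/
def FellBundle.cst (𝔅 : FellBundle G) {s t : G} (h : s = t) (a : 𝔅.F s) : 𝔅.F t :=
  h ▸ a

/-- The pull-back `q*𝒟` of a Fell bundle `𝒟` over `G/N` along the quotient map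
`q : G → G/N`; its fiber over `s` is the fiber of `𝒟` over `sN`. -/
def FellBundle.pullback (N : Subgroup G) [N.Normal] (𝔇 : FellBundle (G ⧸ N)) :
    FellBundle G where
  F s := 𝔇.F (↑s)
  mul a b := 𝔇.mul a b
  star' a := 𝔇.star' a
  add_mul' := fun a b c => 𝔇.add_mul' a b c
  mul_add' := fun a b c => 𝔇.mul_add' a b c
  smul_mul' := fun z a b => 𝔇.smul_mul' z a b
  mul_smul' := fun z a b => 𝔇.mul_smul' z a b
  norm_mul_le' := fun a b => 𝔇.norm_mul_le' a b
  mul_assoc' := fun a b c => 𝔇.mul_assoc' a b c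
  star_add' := fun a b => 𝔇.star_add' a b
  star_smul' := fun z a => 𝔇.star_smul' z a
  star_star' := fun a => 𝔇.star_star' a
  star_mul'' := fun a b => 𝔇.star_mul'' a b
  norm_star' := fun a => 𝔇.norm_star' a
  norm_star_mul_self' := fun a => 𝔇.norm_star_mul_self' a

/-- The restriction `𝒜_H` of a Fell bundle over `G` to a subgroup `H ≤ G`. -/
def FellBundle.restrict (𝔅 : FellBundle G) (H : Subgroup G) : FellBundle H where
  F h := 𝔅.F (↑h)
  mul a b := 𝔅.mul a b
  star' a := 𝔅.star' a
  add_mul' := fun a b c => 𝔅.add_mul' a b c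
  mul_add' := fun a b c => 𝔅.mul_add' a b c
  smul_mul' := fun z a b => 𝔅.smul_mul' z a b
  mul_smul' := fun z a b => 𝔅.mul_smul' z a b
  norm_mul_le' := fun a b => 𝔅.norm_mul_le' a b
  mul_assoc' := fun a b c => 𝔅.mul_assoc' a b c
  star_add' := fun a b => 𝔅.star_add' a b
  star_smul' := fun z a => 𝔅.star_smul' z a
  star_star' := fun a => 𝔅.star_star' a
  star_mul'' := fun a b => 𝔅.star_mul'' a b
  norm_star' := fun a => 𝔅.norm_star' a
  norm_star_mul_self' := fun a => 𝔅.norm_star_mul_self' a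

/-- An isomorphism of Fell bundles over the same group: a family of isometric linear
bijections between the fibers intertwining multiplication and involution. -/
structure FellBundleIso (𝔄 𝔅 : FellBundle G) : Type where
  φ : ∀ s, 𝔄.F s → 𝔅.F s
  φ_add : ∀ s (a b : 𝔄.F s), φ s (a + b) = φ s a + φ s b
  φ_smul : ∀ s (z : ℂ) (a : 𝔄.F s), φ s (z • a) = z • φ s a
  φ_norm : ∀ s (a : 𝔄.F s), ‖φ s a‖ = ‖a‖
  φ_bij : ∀ s, Function.Bijective (φ s)
  φ_mul : ∀ (s t : G) (a : 𝔄.F s) (b : 𝔄.F t), φ (s*t) (𝔄.mul a b) = 𝔅.mul (φ s a) (φ t b)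
  φ_star : ∀ (s : G) (a : 𝔄.F s), φ s⁻¹ (𝔄.star' a) = 𝔅.star' (φ s a)

/-- A multiplier of order `s` of a Fell bundle: a pair of maps `L : F t → F (s*t)`,
`R : F t → F (t*s)` satisfying the associativity condition `R(a)b = aL(b)`. -/
structure FBMul (𝔅 : FellBundle G) (s : G) : Type where
  L : ∀ t, 𝔅.F t → 𝔅.F (s * t)
  R : ∀ t, 𝔅.F t → 𝔅.F (t * s)
  assoc : ∀ (t u : G) (a : 𝔅.F t) (b : 𝔅.F u), HEq (𝔅.mul (R t a) b) (𝔅.mul a (L u b))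

/-- A multiplier `m` of order `s` is unitary when `m* m = m m* = 1` in `M(A_e)`, where
the adjoint is given by `m* a = (a* m)*`, `a m* = (m a*)*`.  The four conditions below
express the equalities `(m*m)a = a = a(m*m)` and `(mm*)a = a = a(mm*)` on every fiber. -/
def FBMul.IsUnitary {𝔅 : FellBundle G} {s : G} (m : FBMul 𝔅 s) : Prop :=
  (∀ (t : G) (a : 𝔅.F t), HEq (𝔅.star' (m.R _ (𝔅.star' (m.L t a)))) a) ∧
  (∀ (t : G) (a : 𝔅.F t), HEq (m.R _ (𝔅.star' (m.L _ (𝔅.star' a)))) a) ∧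
  (∀ (t : G) (a : 𝔅.F t), HEq (m.L _ (𝔅.star' (m.R _ (𝔅.star' a)))) a) ∧
  (∀ (t : G) (a : 𝔅.F t), HEq (𝔅.star' (m.L _ (𝔅.star' (m.R t a)))) a)

/-- A (topologically graded style) realization of a C*-algebra `A` as a cross sectional
algebra of the Fell bundle `𝔅`: isometric linear embeddings of the fibers with densely
spanning ranges, intertwining the bundle operations with those of `A`. -/
structure CrossSectional (𝔅 : FellBundle G) (A : Type) [NonUnitalCStarAlgebra A] where
  ι : ∀ s, 𝔅.F s → A
  ι_add : ∀ s (a b : 𝔅.F s), ι s (a + b) = ι s a + ι s b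
  ι_smul : ∀ s (z : ℂ) (a : 𝔅.F s), ι s (z • a) = z • ι s a
  ι_norm : ∀ s (a : 𝔅.F s), ‖ι s a‖ = ‖a‖
  ι_mul : ∀ (s t : G) (a : 𝔅.F s) (b : 𝔅.F t), ι (s*t) (𝔅.mul a b) = ι s a * ι t b
  ι_star : ∀ (s : G) (a : 𝔅.F s), ι s⁻¹ (𝔅.star' a) = star (ι s a)
  dense' : Dense (↑(Submodule.span ℂ (⋃ s, Set.range (ι s))) : Set A)

/-- A representation of a Fell bundle in a C*-algebra `B`. -/
structure BundleRep (𝔅 : FellBundle G) (B : Type) [NonUnitalCStarAlgebra B] where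
  ρ : ∀ s, 𝔅.F s → B
  ρ_add : ∀ s (a b : 𝔅.F s), ρ s (a + b) = ρ s a + ρ s b
  ρ_smul : ∀ s (z : ℂ) (a : 𝔅.F s), ρ s (z • a) = z • ρ s a
  ρ_norm_le : ∀ s (a : 𝔅.F s), ‖ρ s a‖ ≤ ‖a‖
  ρ_mul : ∀ (s t : G) (a : 𝔅.F s) (b : 𝔅.F t), ρ (s*t) (𝔅.mul a b) = ρ s a * ρ t b
  ρ_star : ∀ (s : G) (a : 𝔅.F s), ρ s⁻¹ (𝔅.star' a) = star (ρ s a)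

/-- A realization of the *full* cross sectional algebra `C*(𝔅)`: a cross sectional
algebra which is universal for representations of the bundle. -/
structure FullCS (𝔅 : FellBundle G) (A : Type) [NonUnitalCStarAlgebra A]
    extends CrossSectional 𝔅 A where
  univ : ∀ (B : CStarAlg) (ρ : BundleRep 𝔅 B.carrier),
    ∃ Φ : A →⋆ₙₐ[ℂ] B.carrier, Continuous Φ ∧ ∀ s a, Φ (ι s a) = ρ.ρ s a

/-- A realization of the *reduced* cross sectional algebra `C*_r(𝔅)`: a topologically
graded cross sectional algebra whose conditional expectation onto the unit fiber is
faithful. -/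
structure ReducedCS (𝔅 : FellBundle G) (A : Type) [NonUnitalCStarAlgebra A]
    extends CrossSectional 𝔅 A where
  E : A →L[ℂ] A
  E_norm : ‖E‖ ≤ 1
  E_unit : ∀ a : 𝔅.F 1, E (ι 1 a) = ι 1 a
  E_zero : ∀ s : G, s ≠ 1 → ∀ a : 𝔅.F s, E (ι s a) = 0
  E_faithful : ∀ x : A, E (star x * x) = 0 → x = 0

/-- A topologically graded cross sectional algebra of `𝔅`. -/
structure TopGradedCS (𝔅 : FellBundle G) (A : Type) [NonUnitalCStarAlgebra A]
    extends CrossSectional 𝔅 A where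
  E : A →L[ℂ] A
  E_norm : ‖E‖ ≤ 1
  E_unit : ∀ a : 𝔅.F 1, E (ι 1 a) = ι 1 a
  E_zero : ∀ s : G, s ≠ 1 → ∀ a : 𝔅.F s, E (ι s a) = 0

/-- The range of a fiber embedding, as a subspace of the cross sectional algebra. -/
def CrossSectional.fiberSub {𝔅 : FellBundle G} {A : Type} [NonUnitalCStarAlgebra A]
    (cs : CrossSectional 𝔅 A) (s : G) : Submodule ℂ A where
  carrier := Set.range (cs.ι s)
  add_mem' := by rintro a b ⟨x, rfl⟩ ⟨y, rfl⟩; exact ⟨x + y, cs.ι_add s x y⟩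
  zero_mem' := by
    refine ⟨0, ?_⟩
    have h := cs.ι_smul s 0 0
    simpa using h
  smul_mem' := by rintro z a ⟨x, rfl⟩; exact ⟨z • x, cs.ι_smul s z x⟩

/-- The full group C*-algebra `C*(G)`: a unital C*-algebra generated by a unitary
representation of `G` which is universal for unitary representations of `G`. -/
structure GroupCStar (G : Type) [Group G] : Type 1 where
  alg : Type
  [inst : CStarAlgebra alg]
  u : G →* alg
  u_star : ∀ s, star (u s) = u s⁻¹
  dense' : Dense (↑(Submodule.span ℂ (Set.range u)) : Set alg)
  univ : ∀ (B : Type) [CStarAlgebra B] (v : G →* B), (∀ s, star (v s) = v s⁻¹) →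
    ∃ Φ : alg →⋆ₐ[ℂ] B, ∀ s, Φ (u s) = v s

attribute [instance] GroupCStar.inst

/-- The left regular representation of `G`: the Hilbert space `ℓ²(G)` presented via a
total orthonormal family `(e_t)_{t ∈ G}` on which `G` acts by translation. -/
structure RegularRep (G : Type) [Group G] : Type 1 where
  H : Type
  [instN : NormedAddCommGroup H]
  [instI : InnerProductSpace ℂ H]
  [instC : CompleteSpace H]
  e : G → H
  ortho : ∀ s t : G, (inner ℂ (e s) (e t) : ℂ) = if s = t then 1 else 0
  total : Dense (↑(Submodule.span ℂ (Set.range e)) : Set H)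
  lam : G → H →L[ℂ] H
  lam_e : ∀ s t : G, lam s (e t) = e (s * t)
  lam_mul : ∀ (s t : G) (x : H), lam (s * t) x = lam s (lam t x)
  lam_one : ∀ x : H, lam 1 x = x
  lam_norm : ∀ (s : G) (x : H), ‖lam s x‖ = ‖x‖

attribute [instance] RegularRep.instN RegularRep.instI RegularRep.instC

/-- The Hilbert space tensor product of two Hilbert spaces. -/
structure HilbertTensor (H K : HilbertC) : Type 1 where
  T : HilbertC
  tmul : H.carrier → K.carrier → T.carrier
  tmul_add_left : ∀ h h' k, tmul (h + h') k = tmul h k + tmul h' k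
  tmul_add_right : ∀ h k k', tmul h (k + k') = tmul h k + tmul h k'
  tmul_smul_left : ∀ (z : ℂ) h k, tmul (z • h) k = z • tmul h k
  tmul_smul_right : ∀ (z : ℂ) h k, tmul h (z • k) = z • tmul h k
  inner_tmul : ∀ h h' k k',
    (inner ℂ (tmul h k) (tmul h' k') : ℂ) = (inner ℂ h h' : ℂ) * (inner ℂ k k' : ℂ)
  total : Dense (↑(Submodule.span ℂ {x : T.carrier | ∃ h k, x = tmul h k}) : Set T.carrier)

/-- A coaction `δ : A → A ⊗ C*(G)` of a discrete group `G` on a C*-algebra `A`.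
The tensor product `A ⊗ C*(G)` is axiomatized as a C*-algebra `T` together with the
elementary tensors `el s a = a ⊗ s`, right multiplication `rmul s = · (1 ⊗ s)` by the
canonical unitaries, the slice maps `id ⊗ χ_s`, and the spatial (minimal) norm
condition;  `δ` is an injective nondegenerate *-homomorphism satisfying
`(δ ⊗ id) ∘ δ = (id ⊗ δ_G) ∘ δ`, which for discrete `G` amounts to the requirement
that the spectral subspaces `{a | δ a = a ⊗ s}` span a dense subspace of `A`. -/
structure Coaction (G : Type) [Group G] (A : Type) [NonUnitalCStarAlgebra A] :
    Type 1 where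
  CG : GroupCStar G
  T : Type
  [instT : NonUnitalCStarAlgebra T]
  el : G → A → T
  el_add : ∀ s (a b : A), el s (a + b) = el s a + el s b
  el_smul : ∀ s (z : ℂ) (a : A), el s (z • a) = z • el s a
  el_norm : ∀ s (a : A), ‖el s a‖ = ‖a‖
  el_mul : ∀ (s t : G) (a b : A), el s a * el t b = el (s * t) (a * b)
  el_star : ∀ (s : G) (a : A), star (el s a) = el s⁻¹ (star a)
  rmul : G → T → T
  rmul_add : ∀ s (x y : T), rmul s (x + y) = rmul s x + rmul s y
  rmul_smul : ∀ s (z : ℂ) (x : T), rmul s (z • x) = z • rmul s x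
  rmul_norm : ∀ s (x : T), ‖rmul s x‖ = ‖x‖
  rmul_el : ∀ (s t : G) (a : A), rmul s (el t a) = el (t * s) a
  rmul_mul : ∀ (s : G) (x y : T), rmul s (x * y) = x * rmul s y
  slice : G → T →L[ℂ] A
  slice_el : ∀ (s t : G) (a : A), slice s (el t a) = if s = t then a else 0
  slice_norm : ∀ s, ‖slice s‖ ≤ 1
  dense_el : Dense (↑(Submodule.span ℂ (⋃ s, Set.range (el s))) : Set T)
  spatial : ∀ (H K : HilbertC) (π : A →⋆ₙₐ[ℂ] (H.carrier →L[ℂ] H.carrier)),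
    Function.Injective π →
    ∀ (σ : CG.alg →⋆ₐ[ℂ] (K.carrier →L[ℂ] K.carrier)), Function.Injective σ →
    ∀ (HT : HilbertTensor H K),
      ∃ Θ : T →⋆ₙₐ[ℂ] (HT.T.carrier →L[ℂ] HT.T.carrier), Function.Injective Θ ∧
        ∀ (s : G) (a : A) (h : H.carrier) (k : K.carrier),
          Θ (el s a) (HT.tmul h k) = HT.tmul (π a h) (σ (CG.u s) k)
  δ : A →⋆ₙₐ[ℂ] T
  δ_cont : Continuous δ
  δ_inj : Function.Injective δ
  nondeg : Dense (↑(Submodule.span ℂ {x : T | ∃ (a : A) (y : T), x = δ a * y}) : Set T)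
  dense_spectral :
    Dense (↑(Submodule.span ℂ {a : A | ∃ s : G, δ a = el s a}) : Set A)

attribute [instance] Coaction.instT

namespace Coaction

variable {A : Type} [NonUnitalCStarAlgebra A] (c : Coaction G A)

lemma el_zero (s : G) : c.el s 0 = 0 := by
  have h := c.el_add s 0 0
  have h0 : c.el s (0 + 0) = c.el s 0 := by norm_num
  rw [h0] at h
  exact (add_right_injective (c.el s 0) (by simpa using h.symm)).symm

end Coaction
namespace Coaction

variable {A : Type} [NonUnitalCStarAlgebra A] (c : Coaction G A)

lemma el_isometry (s : G) : Isometry (c.el s) := by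
  apply Isometry.of_dist_eq
  intro a b
  have hsub : c.el s a - c.el s b = c.el s (a - b) := by
    have h1 : c.el s (a - b) = c.el s (a + (-1 : ℂ) • b) := by
      congr 1
      simp [sub_eq_add_neg]
    rw [h1, c.el_add, c.el_smul]
    simp [sub_eq_add_neg]
  rw [dist_eq_norm, dist_eq_norm, hsub, c.el_norm]

/-- The spectral subspace `A_s = {a ∈ A : δ(a) = a ⊗ s}` of a coaction. -/
def spectral (s : G) : Submodule ℂ A where
  carrier := {a : A | c.δ a = c.el s a}
  add_mem' := by
    intro a b ha hb
    simp only [Set.mem_setOf_eq] at *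
    rw [map_add, ha, hb, ← c.el_add]
  zero_mem' := by
    simp only [Set.mem_setOf_eq, map_zero, c.el_zero]
  smul_mem' := by
    intro z a ha
    simp only [Set.mem_setOf_eq] at *
    rw [map_smul, ha, c.el_smul]

lemma spectral_closed (s : G) : IsClosed ((c.spectral s : Set A)) := by
  have : (c.spectral s : Set A) = {a : A | c.δ a = c.el s a} := rfl
  rw [this]
  exact isClosed_eq c.δ_cont (c.el_isometry s).continuous

lemma mem_spectral {s : G} {a : A} : a ∈ c.spectral s ↔ c.δ a = c.el s a := Iff.rfl

lemma spectral_mul {s t : G} {a b : A} (ha : a ∈ c.spectral s) (hb : b ∈ c.spectral t) :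
    a * b ∈ c.spectral (s * t) := by
  rw [mem_spectral] at *
  rw [map_mul, ha, hb, c.el_mul]

lemma spectral_star {s : G} {a : A} (ha : a ∈ c.spectral s) :
    star a ∈ c.spectral s⁻¹ := by
  rw [mem_spectral] at *
  rw [map_star, ha, c.el_star]

end Coaction

/-- HEq of subtype elements in equal submodules with equal values. -/
theorem heq_submodule {A : Type} [NonUnitalCStarAlgebra A] {p q : Submodule ℂ A}
    (h : p = q) (x : ↥p) (y : ↥q) (hxy : (x : A) = (y : A)) : HEq x y := by
  subst h
  exact heq_of_eq (Subtype.ext hxy)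

namespace Coaction

variable {A : Type} [NonUnitalCStarAlgebra A] (c : Coaction G A)

/-- The Fell bundle of spectral subspaces associated to a coaction of a discrete
group. -/
def bundle : FellBundle G where
  F s := ↥(c.spectral s)
  nacg s := inferInstance
  nsp s := inferInstance
  cplt s := (c.spectral_closed s).completeSpace_coe
  mul {s t} a b := ⟨(a : A) * (b : A), c.spectral_mul a.2 b.2⟩
  star' {s} a := ⟨star (a : A), c.spectral_star a.2⟩
  add_mul' := by intros; apply Subtype.ext; simp [add_mul]
  mul_add' := by intros; apply Subtype.ext; simp [mul_add]
  smul_mul' := by intros; apply Subtype.ext; simp [smul_mul_assoc]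
  mul_smul' := by intros; apply Subtype.ext; simp [mul_smul_comm]
  norm_mul_le' := by intros s t a b; exact norm_mul_le (a : A) (b : A)
  mul_assoc' := by
    intro s t u a b c'
    exact heq_submodule (by rw [mul_assoc]) _ _ (mul_assoc _ _ _)
  star_add' := by intros; apply Subtype.ext; simp [star_add]
  star_smul' := by intros; apply Subtype.ext; simp [star_smul]
  star_star' := by
    intro s a
    exact heq_submodule (by rw [inv_inv]) _ _ (star_star _)
  star_mul'' := by
    intro s t a b
    exact heq_submodule (by rw [mul_inv_rev]) _ _ (star_mul _ _)
  norm_star' := by intro s a; exact norm_star (a : A)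
  norm_star_mul_self' := by
    intro s a
    exact CStarRing.norm_star_mul_self (x := (a : A))

end Coaction

/-- A self-adjoint idempotent multiplier ("projection") of a C*-algebra, given by its
pair of left/right multiplication operators; used to model `j_G(χ_t) ∈ M(A ×_δ G)`. -/
structure MProj (C : Type) [NonUnitalCStarAlgebra C] where
  L : C →L[ℂ] C
  R : C →L[ℂ] C
  assoc : ∀ x y : C, R x * y = x * L y
  sa : ∀ x : C, star (L x) = R (star x)
  idemL : ∀ x : C, L (L x) = L x
  idemR : ∀ x : C, R (R x) = R x
  mulL : ∀ x y : C, L (x * y) = L x * y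
  mulR : ∀ x y : C, R (x * y) = x * R y

/-- A covariant representation `(π, μ)` of a grading `fib` of `A` (the spectral
subspaces of a coaction) in a C*-algebra `C`:  `π` is a nondegenerate
*-homomorphism and `μ` is given by the orthogonal family of projections
`p t = μ(χ_t)` summing strictly to `1`, subject to the covariance condition
`π(a_s) μ(χ_t) = μ(χ_{st}) π(a_s)`. -/
structure CovPair {A : Type} [NonUnitalCStarAlgebra A] (fib : G → Submodule ℂ A)
    (C : Type) [NonUnitalCStarAlgebra C] where
  π : A →⋆ₙₐ[ℂ] C
  nondeg : Dense (↑(Submodule.span ℂ {x : C | ∃ (a : A) (y : C), x = π a * y}) : Set C)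
  p : G → MProj C
  orth : ∀ s t : G, s ≠ t → ∀ x : C, (p s).L ((p t).L x) = 0
  total : ∀ x : C, (∀ t : G, (p t).R x = 0) → x = 0
  covL : ∀ (s t : G) (a : A), a ∈ fib s → ∀ x : C,
    π a * (p t).L x = (p (s * t)).L (π a * x)
  covR : ∀ (s t : G) (a : A), a ∈ fib s → ∀ x : C,
    (p t).R (x * π a) = ((p (s * t)).R x) * π a

/-- The element `π(a)·μ(χ_t)` of a covariant pair. -/
def CovPair.gen {A : Type} [NonUnitalCStarAlgebra A] {fib : G → Submodule ℂ A}
    {C : Type} [NonUnitalCStarAlgebra C] (ρ : CovPair fib C) (a : A) (t : G) : C :=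
  (ρ.p t).R (ρ.π a)

/-- The crossed product `A ×_δ G` of a coaction with spectral subspaces `fib`:
a C*-algebra generated by a universal covariant pair `(j_A, j_G)`. -/
structure CrossedProduct {A : Type} [NonUnitalCStarAlgebra A]
    (fib : G → Submodule ℂ A) : Type 1 where
  C : Type
  [instC : NonUnitalCStarAlgebra C]
  j : CovPair fib C
  gen_dense : Dense (↑(Submodule.span ℂ
    {x : C | ∃ (s t : G) (a : A), a ∈ fib s ∧ x = j.gen a t}) : Set C)
  univ : ∀ (B : CStarAlg) (ρ : CovPair fib B.carrier),
    ∃ Φ : C →⋆ₙₐ[ℂ] B.carrier, Continuous Φ ∧ (∀ a : A, Φ (j.π a) = ρ.π a) ∧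
      ∀ (t : G) (x : C), Φ ((j.p t).R x) = (ρ.p t).R (Φ x) ∧
        Φ ((j.p t).L x) = (ρ.p t).L (Φ x)

attribute [instance] CrossedProduct.instC

/-- A coaction is normal when `j_A` is injective on any crossed product. -/
def Coaction.Normal {A : Type} [NonUnitalCStarAlgebra A] (c : Coaction G A) : Prop :=
  ∀ cp : CrossedProduct c.spectral, Function.Injective cp.j.π

/-- A closed two-sided ideal of a C*-algebra. -/
def IsClosedIdeal {B : Type} [NonUnitalCStarAlgebra B] (I : Submodule ℂ B) : Prop :=
  IsClosed (I : Set B) ∧ (∀ (b x : B), x ∈ I → b * x ∈ I) ∧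
    (∀ (b x : B), x ∈ I → x * b ∈ I)

/-- `δ`-invariance of an ideal: `δ(I)(1 ⊗ C*(G)) = I ⊗ C*(G)`. -/
def Coaction.InvIdeal {A : Type} [NonUnitalCStarAlgebra A] (c : Coaction G A)
    (I : Submodule ℂ A) : Prop :=
  closure (↑(Submodule.span ℂ {y : c.T | ∃ (s : G), ∃ a ∈ I, y = c.rmul s (c.δ a)}) : Set c.T)
    = closure (↑(Submodule.span ℂ {y : c.T | ∃ (s : G), ∃ a ∈ I, y = c.el s a}) : Set c.T)

/-- An action of a discrete group `G` on a C*-algebra `B` by *-automorphisms. -/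
structure CAction (G : Type) [Group G] (B : Type) [NonUnitalCStarAlgebra B] where
  α : G → B → B
  map_add : ∀ s (x y : B), α s (x + y) = α s x + α s y
  map_smul : ∀ s (z : ℂ) (x : B), α s (z • x) = z • α s x
  map_mul : ∀ s (x y : B), α s (x * y) = α s x * α s y
  map_star : ∀ s (x : B), α s (star x) = star (α s x)
  α_one : ∀ x : B, α 1 x = x
  α_comp : ∀ (s t : G) (x : B), α (s * t) x = α s (α t x)
  isometric : ∀ s (x : B), ‖α s x‖ = ‖x‖

/-- The semidirect product Fell bundle `B × G` of an action, with operations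
`(b,s)(c,t) = (b α_s(c), st)` and `(b,s)* = (α_{s⁻¹}(b)*, s⁻¹)`. -/
def CAction.semidirect {B : Type} [NonUnitalCStarAlgebra B] (β : CAction G B) :
    FellBundle G where
  F _ := B
  mul {s t} a b := a * β.α s b
  star' {s} a := star (β.α s⁻¹ a)
  add_mul' := by intros s t a b c; simp [add_mul]
  mul_add' := by intros s t a b c; simp [β.map_add, mul_add]
  smul_mul' := by intros; simp [smul_mul_assoc]
  mul_smul' := by intros s t z a b; simp [β.map_smul, mul_smul_comm]
  norm_mul_le' := by
    intros s t a b
    calc ‖a * β.α s b‖ ≤ ‖a‖ * ‖β.α s b‖ := norm_mul_le _ _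
    _ = ‖a‖ * ‖b‖ := by rw [β.isometric]
  mul_assoc' := by
    intro s t u a b c
    refine heq_of_eq ?_
    show (a * β.α s b) * β.α (s * t) c = a * β.α s (b * β.α t c)
    rw [β.map_mul, β.α_comp, mul_assoc]
  star_add' := by intros; simp [β.map_add, star_add]
  star_smul' := by intros; simp [β.map_smul, star_smul]
  star_star' := by
    intro s a
    refine heq_of_eq ?_
    show star (β.α (s⁻¹)⁻¹ (star (β.α s⁻¹ a))) = a
    rw [inv_inv, ← β.map_star, star_star, ← β.α_comp, mul_inv_cancel, β.α_one]
  star_mul'' := by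
    intro s t a b
    refine heq_of_eq ?_
    show star (β.α (s*t)⁻¹ (a * β.α s b)) = star (β.α t⁻¹ b) * β.α t⁻¹ (star (β.α s⁻¹ a))
    have h1 : (s*t)⁻¹ * s = t⁻¹ := by group
    have h2 : t⁻¹ * s⁻¹ = (s*t)⁻¹ := by group
    simp only [β.map_mul, star_mul, ← β.map_star, ← β.α_comp, h1, h2]
  norm_star' := by
    intro s a
    show ‖star (β.α s⁻¹ a)‖ = ‖a‖
    rw [norm_star, β.isometric]
  norm_star_mul_self' := by
    intro s a
    show ‖star (β.α s⁻¹ a) * β.α s⁻¹ a‖ = ‖a‖ * ‖a‖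
    rw [CStarRing.norm_star_mul_self, β.isometric]

/-- A unitary multiplier of a C*-algebra `B`, given by its pair `(L, R)` of left and
right multiplication maps; the four conditions express `m* m = m m* = 1` with
`m* a = (a* m)*` and `a m* = (m a*)*`. -/
structure UMul (B : Type) [NonUnitalCStarAlgebra B] where
  L : B → B
  R : B → B
  assoc : ∀ x y : B, R x * y = x * L y
  mulL : ∀ x y : B, L (x * y) = L x * y
  mulR : ∀ x y : B, R (x * y) = x * R y
  u1 : ∀ x : B, star (R (star (L x))) = x
  u2 : ∀ x : B, R (star (L (star x))) = x
  u3 : ∀ x : B, L (star (R (star x))) = x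
  u4 : ∀ x : B, star (L (star (R x))) = x

/-- A Green twist for an action `β` of `G` over a normal subgroup `N`: a homomorphism
`τ : N → UM(B)` satisfying `α_s(τ_n) = τ_{sns⁻¹}` and `α_n = Ad τ_n`. -/
structure Twist {B : Type} [NonUnitalCStarAlgebra B] (β : CAction G B)
    (N : Subgroup G) [hN : N.Normal] where
  τ : N → UMul B
  τ_mul_L : ∀ (n m : N) (x : B), (τ (n * m)).L x = (τ n).L ((τ m).L x)
  τ_mul_R : ∀ (n m : N) (x : B), (τ (n * m)).R x = (τ m).R ((τ n).R x)
  τ_one_L : ∀ x : B, (τ 1).L x = x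
  τ_one_R : ∀ x : B, (τ 1).R x = x
  equivar_L : ∀ (s : G) (n : N) (x : B),
    β.α s ((τ n).L x) = (τ ⟨s * n * s⁻¹, hN.conj_mem n n.2 s⟩).L (β.α s x)
  equivar_R : ∀ (s : G) (n : N) (x : B),
    β.α s ((τ n).R x) = (τ ⟨s * n * s⁻¹, hN.conj_mem n n.2 s⟩).R (β.α s x)
  inner : ∀ (n : N) (x : B), β.α n x = (τ n).L ((τ n⁻¹).R x)

/-- A presentation of a Fell bundle `𝔇` over `G/N` as the twisted semidirect product
bundle `B ×_N G`: the maps `ψ s : B → 𝔇.F sN`, `b ↦ [b,s]`, are onto the fibers and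
implement the orbit-space structure of the quotient of `B × G` by the `N`-action
`(b,s)·n = (bτ_n, n⁻¹s)`. -/
structure TwistedSemidirectData {B : Type} [NonUnitalCStarAlgebra B]
    (β : CAction G B) (N : Subgroup G) [hN : N.Normal] (tw : Twist β N)
    (𝔇 : FellBundle (G ⧸ N)) where
  ψ : ∀ s : G, B → 𝔇.F (↑s)
  ψ_add : ∀ (s : G) (b b' : B), ψ s (b + b') = ψ s b + ψ s b'
  ψ_smul : ∀ (s : G) (z : ℂ) (b : B), ψ s (z • b) = z • ψ s b
  ψ_norm : ∀ (s : G) (b : B), ‖ψ s b‖ = ‖b‖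
  ψ_surj : ∀ s : G, Function.Surjective (ψ s)
  ψ_inj : ∀ s : G, Function.Injective (ψ s)
  ψ_orbit : ∀ (n : N) (s : G) (b : B), HEq (ψ ((n : G) * s) b) (ψ s ((tw.τ n).R b))
  ψ_mul : ∀ (s t : G) (b c : B), HEq (𝔇.mul (ψ s b) (ψ t c)) (ψ (s * t) (b * β.α s c))
  ψ_star : ∀ (s : G) (b : B), HEq (𝔇.star' (ψ s b)) (ψ s⁻¹ (star (β.α s⁻¹ b)))

/-- An imprimitivity (Morita equivalence) bimodule between two C*-algebras. -/
structure ImpBimod (A B : Type) [NonUnitalCStarAlgebra A] [NonUnitalCStarAlgebra B] :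
    Type 1 where
  X : Type
  [instX : NormedAddCommGroup X]
  [instM : NormedSpace ℂ X]
  [instCp : CompleteSpace X]
  actL : A → X → X
  actR : X → B → X
  actL_add_left : ∀ (a a' : A) (x : X), actL (a + a') x = actL a x + actL a' x
  actL_add_right : ∀ (a : A) (x y : X), actL a (x + y) = actL a x + actL a y
  actL_smul : ∀ (z : ℂ) (a : A) (x : X), actL (z • a) x = z • actL a x
  actL_mul : ∀ (a a' : A) (x : X), actL (a * a') x = actL a (actL a' x)
  actR_add_left : ∀ (x y : X) (b : B), actR (x + y) b = actR x b + actR y b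
  actR_add_right : ∀ (x : X) (b b' : B), actR x (b + b') = actR x b + actR x b'
  actR_smul : ∀ (z : ℂ) (x : X) (b : B), actR x (z • b) = z • actR x b
  actR_mul : ∀ (x : X) (b b' : B), actR x (b * b') = actR (actR x b) b'
  actLR_comm : ∀ (a : A) (x : X) (b : B), actL a (actR x b) = actR (actL a x) b
  ipL : X → X → A
  ipR : X → X → B
  ipL_add_left : ∀ x y z : X, ipL (x + y) z = ipL x z + ipL y z
  ipL_add_right : ∀ x y z : X, ipL x (y + z) = ipL x y + ipL x z
  ipL_smul_left : ∀ (c : ℂ) (x y : X), ipL (c • x) y = c • ipL x y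
  ipL_smul_right : ∀ (c : ℂ) (x y : X), ipL x (c • y) = conj c • ipL x y
  ipL_star : ∀ x y : X, star (ipL x y) = ipL y x
  ipL_act : ∀ (a : A) (x y : X), ipL (actL a x) y = a * ipL x y
  ipR_add_left : ∀ x y z : X, ipR (x + y) z = ipR x z + ipR y z
  ipR_add_right : ∀ x y z : X, ipR x (y + z) = ipR x y + ipR x z
  ipR_smul_left : ∀ (c : ℂ) (x y : X), ipR (c • x) y = conj c • ipR x y
  ipR_smul_right : ∀ (c : ℂ) (x y : X), ipR x (c • y) = c • ipR x y
  ipR_star : ∀ x y : X, star (ipR x y) = ipR y x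
  ipR_act : ∀ (x y : X) (b : B), ipR x (actR y b) = ipR x y * b
  compat : ∀ x y z : X, actL (ipL x y) z = actR x (ipR y z)
  ipL_pos : ∀ x : X, ∃ a : A, ipL x x = star a * a
  ipR_pos : ∀ x : X, ∃ b : B, ipR x x = star b * b
  norm_ipL : ∀ x : X, ‖x‖ ^ 2 = ‖ipL x x‖
  norm_ipR : ∀ x : X, ‖x‖ ^ 2 = ‖ipR x x‖
  full_left : Dense (↑(Submodule.span ℂ {a : A | ∃ x y : X, a = ipL x y}) : Set A)
  full_right : Dense (↑(Submodule.span ℂ {b : B | ∃ x y : X, b = ipR x y}) : Set B)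

attribute [instance] ImpBimod.instX ImpBimod.instM ImpBimod.instCp

/-- Morita equivalence of C*-algebras (existence of an imprimitivity bimodule). -/
def MoritaEq (A B : Type) [NonUnitalCStarAlgebra A] [NonUnitalCStarAlgebra B] : Prop :=
  Nonempty (ImpBimod A B)

/-- `c` is the dual coaction on the cross sectional algebra `cs`: it maps each fiber
element `a_s` to `a_s ⊗ s`, i.e. the fibers land in the spectral subspaces. -/
def IsDualCoaction {𝔅 : FellBundle G} {A : Type} [NonUnitalCStarAlgebra A]
    (cs : CrossSectional 𝔅 A) (c : Coaction G A) : Prop :=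
  ∀ (s : G) (a : 𝔅.F s), cs.ι s a ∈ c.spectral s

/-- Exel's approximation property (EP) for a Fell bundle over a discrete group:
a uniformly bounded net of finitely supported `A_e`-valued functions `f_i` with
`∑_s f_i(ts)* a_t f_i(s) → a_t` for every `a_t ∈ A_t`. -/
def FellBundle.HasEP (𝒜 : FellBundle G) : Prop :=
  ∃ C : ℝ, 0 ≤ C ∧ ∀ ε : ℝ, 0 < ε → ∀ E : Finset (Σ t : G, 𝒜.F t),
    ∃ (S : Finset G) (f : G → 𝒜.F 1),
      (∀ s ∉ S, f s = 0) ∧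
      ‖∑ s ∈ S, 𝒜.cst (by group : (1:G)⁻¹ * 1 = 1) (𝒜.mul (𝒜.star' (f s)) (f s))‖ ≤ C ∧
      ∀ p ∈ E,
        ‖(∑ s ∈ S, 𝒜.cst (by group : (1:G)⁻¹ * p.1 * 1 = p.1)
            (𝒜.mul (𝒜.mul (𝒜.star' (f (p.1 * s))) p.2) (f s))) - p.2‖ < ε

/-- A primitive ideal of a C*-algebra: the kernel of a nonzero (nondegenerate)
topologically irreducible *-representation on a Hilbert space. -/
def IsPrimitive {B : Type} [NonUnitalCStarAlgebra B] (P : Submodule ℂ B) : Prop :=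
  ∃ (H : HilbertC) (π : B →⋆ₙₐ[ℂ] H.Op),
    (∃ v : H.carrier, v ≠ 0) ∧
    Dense (↑(Submodule.span ℂ {v : H.carrier | ∃ (b : B) (w : H.carrier),
      v = π b w}) : Set H.carrier) ∧
    (∀ K : Submodule ℂ H.carrier, IsClosed (K : Set H.carrier) →
      (∀ b : B, ∀ v ∈ K, π b v ∈ K) → K = ⊥ ∨ K = ⊤) ∧
    (∀ b : B, b ∈ P ↔ π b = 0)


/-! ### Auxiliary machinery for the proof of `stmt_17` -/

section Stmt17Aux

/-- Approximate left units obtained from the continuous functional calculus. -/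
private lemma stmt17_cstar_approx {B : Type} [NonUnitalCStarAlgebra B] (p : B) {ε : ℝ}
    (hε : 0 < ε) :
    ∃ g : ℝ → ℝ, Continuous g ∧ g 0 = 0 ∧ ‖cfcₙ g (p * star p) * p - p‖ < ε := by
  set a := p * star p with ha_def
  have ha : IsSelfAdjoint a := by
    show star a = a
    rw [ha_def]; simp [star_mul]
  by_cases hM : a = 0
  · refine ⟨0, continuous_const, rfl, ?_⟩
    have hp : p = 0 := by
      have h0 : ‖p‖ * ‖p‖ = 0 := by
        rw [← CStarRing.norm_self_mul_star (x := p), ← ha_def, hM, norm_zero]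
      exact norm_eq_zero.mp (mul_self_eq_zero.mp h0)
    simp [hp, hε]
  · have hM0 : (0:ℝ) < ‖a‖ := norm_pos_iff.mpr hM
    set M : ℝ := ‖a‖ with hMdef
    set δ : ℝ := min M (ε^2/2) with hδdef
    have hδ0 : 0 < δ := lt_min hM0 (by positivity)
    have hδM : δ ≤ M := min_le_left _ _
    set r : ℝ := 1 - δ^2/M^2 with hrdef
    have hr0 : 0 ≤ r := by
      have h1 : δ^2 ≤ M^2 := by
        apply pow_le_pow_left₀ hδ0.le hδM
      have h2 : δ^2/M^2 ≤ 1 := by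
        rw [div_le_one (by positivity)]; exact h1
      rw [hrdef]; linarith
    have hr1 : r < 1 := by
      rw [hrdef]
      have : 0 < δ^2/M^2 := by positivity
      linarith
    obtain ⟨m, hm⟩ : ∃ m : ℕ, r ^ m < ε^2/2/M := exists_pow_lt_of_lt_one (by positivity) hr1
    have hmM : M * r ^ m < ε^2/2 := by
      rw [mul_comm, ← lt_div_iff₀ hM0]; exact hm
    set g : ℝ → ℝ := fun t => 1 - (1 - t^2/M^2)^m with hgdef
    have hgc : Continuous g := by
      rw [hgdef]; fun_prop
    have hg0 : g 0 = 0 := by simp [hgdef]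
    refine ⟨g, hgc, hg0, ?_⟩
    set q : B := cfcₙ g a with hq_def
    have hq_sa : star q = q := (cfcₙ_predicate g a).star_eq
    set x : B := q * p - p with hx_def
    have hxx : x * star x = ((q * a) * q - q * a) - (a * q - a) := by
      rw [hx_def, star_sub, star_mul, hq_sa, ha_def]
      noncomm_ring
    have hid : ContinuousOn (fun t : ℝ => t) (quasispectrum ℝ a) := continuous_id.continuousOn
    have c1 : cfcₙ (fun t : ℝ => g t * t) a = q * a := by
      rw [cfcₙ_mul g (fun t => t) a hgc.continuousOn hg0 hid rfl, cfcₙ_id' ℝ a]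
    have c2 : cfcₙ (fun t : ℝ => t * g t) a = a * q := by
      rw [cfcₙ_mul (fun t => t) g a hid rfl hgc.continuousOn hg0, cfcₙ_id' ℝ a]
    have c3 : cfcₙ (fun t : ℝ => (g t * t) * g t) a = (q * a) * q := by
      rw [cfcₙ_mul (fun t => g t * t) g a ((hgc.mul continuous_id).continuousOn)
        (by simp [hg0]) hgc.continuousOn hg0, c1]
    have c4 : cfcₙ (fun t : ℝ => ((g t * t) * g t - g t * t) - (t * g t - t)) a
        = ((q * a) * q - q * a) - (a * q - a) := by
      rw [cfcₙ_sub (fun t => (g t * t) * g t - g t * t) (fun t => t * g t - t) a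
        (((hgc.mul continuous_id).mul hgc).sub (hgc.mul continuous_id)).continuousOn
        (by simp [hg0])
        ((continuous_id.mul hgc).sub continuous_id).continuousOn
        (by simp [hg0]),
        cfcₙ_sub (fun t => (g t * t) * g t) (fun t => g t * t) a
        ((hgc.mul continuous_id).mul hgc).continuousOn (by simp [hg0])
        (hgc.mul continuous_id).continuousOn (by simp [hg0]),
        cfcₙ_sub (fun t => t * g t) (fun t => t) a
        (continuous_id.mul hgc).continuousOn (by simp [hg0]) hid rfl,
        c3, c1, c2, cfcₙ_id' ℝ a]
    have hspec : ∀ t ∈ quasispectrum ℝ a, |t| ≤ M := by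
      intro t ht
      rw [Unitization.quasispectrum_eq_spectrum_inr' ℝ ℂ] at ht
      have := spectrum.norm_le_norm_of_mem ht
      simpa [Unitization.norm_inr] using this
    have hbound : ∀ t ∈ quasispectrum ℝ a,
        ‖((g t * t) * g t - g t * t) - (t * g t - t)‖ ≤ ε^2/2 := by
      intro t ht
      have htM := hspec t ht
      have hfact : ((g t * t) * g t - g t * t) - (t * g t - t) = t * ((1 - t^2/M^2)^m)^2 := by
        rw [hgdef]; ring
      rw [hfact, Real.norm_eq_abs, abs_mul]
      have hk0 : 0 ≤ 1 - t^2/M^2 := by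
        have h1 : t^2 ≤ M^2 := by
          rw [← sq_abs t]
          exact pow_le_pow_left₀ (abs_nonneg t) htM 2
        have h2 : t^2/M^2 ≤ 1 := by rw [div_le_one (by positivity)]; exact h1
        linarith
      have hk1 : 1 - t^2/M^2 ≤ 1 := by
        have : 0 ≤ t^2/M^2 := by positivity
        linarith
      have habs2 : |((1 - t^2/M^2)^m)^2| ≤ 1 := by
        rw [abs_of_nonneg (by positivity)]
        exact pow_le_one₀ (by positivity) (pow_le_one₀ hk0 hk1)
      rcases le_or_gt (|t|) δ with hcase | hcase
      · calc |t| * |((1 - t^2/M^2)^m)^2| ≤ δ * 1 :=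
          mul_le_mul hcase habs2 (abs_nonneg _) hδ0.le
        _ = δ := mul_one δ
        _ ≤ ε^2/2 := min_le_right _ _
      · have hkr : 1 - t^2/M^2 ≤ r := by
          rw [hrdef]
          have h1 : δ^2 ≤ t^2 := by
            rw [← sq_abs t]
            exact pow_le_pow_left₀ hδ0.le hcase.le 2
          have h2 : δ^2/M^2 ≤ t^2/M^2 := by gcongr
          linarith
        have hkm : |((1 - t^2/M^2)^m)^2| ≤ r^m := by
          rw [abs_of_nonneg (by positivity)]
          have h1 : (1 - t^2/M^2)^m ≤ r^m := pow_le_pow_left₀ hk0 hkr m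
          have h2 : (1 - t^2/M^2)^m ≤ 1 := pow_le_one₀ hk0 hk1
          have h3 : 0 ≤ (1 - t^2/M^2)^m := by positivity
          calc ((1 - t^2/M^2)^m)^2 = (1 - t^2/M^2)^m * (1 - t^2/M^2)^m := sq _
          _ ≤ r^m * 1 := mul_le_mul h1 h2 h3 (le_trans h3 h1)
          _ = r^m := mul_one _
        calc |t| * |((1 - t^2/M^2)^m)^2| ≤ M * r^m :=
          mul_le_mul htM hkm (abs_nonneg _) hM0.le
        _ ≤ ε^2/2 := hmM.le
    have hxxnorm : ‖x * star x‖ ≤ ε^2/2 := by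
      rw [hxx, ← c4]
      exact norm_cfcₙ_le hbound
    have hnx : ‖x‖ * ‖x‖ ≤ ε^2/2 := by
      rw [← CStarRing.norm_self_mul_star (x := x)]
      exact hxxnorm
    nlinarith [norm_nonneg x]

variable {G : Type} [Group G]

private lemma stmt17_mul_cast_left {Γ : Type} [Group Γ] (𝔇 : FellBundle Γ) {x y : Γ}
    (e : x = y) {z : Γ} (a : 𝔇.F x) (b : 𝔇.F z) :
    HEq (𝔇.mul (cast (congrArg 𝔇.F e) a) b) (𝔇.mul a b) := by subst e; rfl

private lemma stmt17_mul_cast_right {Γ : Type} [Group Γ] (𝔇 : FellBundle Γ) {x y : Γ}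
    (e : x = y) {z : Γ} (a : 𝔇.F z) (b : 𝔇.F x) :
    HEq (𝔇.mul a (cast (congrArg 𝔇.F e) b)) (𝔇.mul a b) := by subst e; rfl

private lemma stmt17_cast_add {Γ : Type} [Group Γ] (𝔇 : FellBundle Γ) {x y : Γ}
    (e : x = y) (u v : 𝔇.F x) :
    cast (congrArg 𝔇.F e) (u + v) = cast (congrArg 𝔇.F e) u + cast (congrArg 𝔇.F e) v := by
  subst e; rfl

private lemma stmt17_cast_norm {Γ : Type} [Group Γ] (𝔇 : FellBundle Γ) {x y : Γ}
    (e : x = y) (u : 𝔇.F x) : ‖cast (congrArg 𝔇.F e) u‖ = ‖u‖ := by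
  subst e; rfl

private lemma stmt17_phi_heq {B : Type} [NonUnitalCStarAlgebra B]
    {β : CAction G B} {N : Subgroup G} [N.Normal] {𝔇 : FellBundle (G ⧸ N)}
    (iso : FellBundleIso β.semidirect (FellBundle.pullback N 𝔇))
    {s t : G} (h : s = t) (x : B) : HEq (iso.φ s x) (iso.φ t x) := by subst h; rfl

/-- From an isomorphism of the semidirect product bundle with a pull-back bundle along
`G → G/N` and an element `n ∈ N`, produce the "multiplier" map `W` (right translation by the
unitary multiplier implementing `β_n`). -/
private lemma stmt17_exists_W {B : Type} [NonUnitalCStarAlgebra B]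
    (β : CAction G B) (N : Subgroup G) [N.Normal] (𝔇 : FellBundle (G ⧸ N))
    (iso : FellBundleIso β.semidirect (FellBundle.pullback N 𝔇))
    {n : G} (hn : n ∈ N) :
    ∃ W : B → B, (∀ x y : B, W (x + y) = W x + W y) ∧ (∀ x : B, ‖W x‖ = ‖x‖) ∧
      (∀ a b : B, W (a * β.α n b) = W a * b) ∧ (∀ a b : B, W (a * b) = a * W b) := by
  have e : ((n : G) : G ⧸ N) = ((1 : G) : G ⧸ N) := by
    rw [QuotientGroup.mk_one]
    exact (QuotientGroup.eq_one_iff n).mpr hn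
  set eF : 𝔇.F ((n : G) : G ⧸ N) = 𝔇.F ((1 : G) : G ⧸ N) := congrArg 𝔇.F e with heF
  set Ψ : B ≃ 𝔇.F ((1 : G) : G ⧸ N) := Equiv.ofBijective (iso.φ 1) (iso.φ_bij 1) with hΨ
  set W : B → B := fun x => Ψ.symm (cast eF (iso.φ n x)) with hWdef
  have hW : ∀ x : B, iso.φ 1 (W x) = cast eF (iso.φ n x) := fun x =>
    Ψ.apply_symm_apply _
  have hinj : Function.Injective (iso.φ 1) := (iso.φ_bij 1).1
  have hadd : ∀ x y : B, W (x + y) = W x + W y := by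
    intro x y
    apply hinj
    erw [iso.φ_add 1 (W x) (W y), hW, hW, hW, iso.φ_add n x y, stmt17_cast_add 𝔇 e]; rfl
  have hnorm : ∀ x : B, ‖W x‖ = ‖x‖ := by
    intro x
    calc ‖W x‖ = ‖iso.φ 1 (W x)‖ := (iso.φ_norm 1 (W x)).symm
    _ = ‖cast eF (iso.φ n x)‖ := by rw [hW]; rfl
    _ = ‖iso.φ n x‖ := stmt17_cast_norm 𝔇 e _
    _ = ‖x‖ := iso.φ_norm n x
  have hC1 : ∀ a b : B, W (a * β.α n b) = W a * b := by
    intro a b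
    apply hinj
    rw [hW]
    refine eq_of_heq ?_
    refine (cast_heq eF _).trans ?_
    refine (stmt17_phi_heq iso (mul_one n).symm (a * β.α n b)).trans ?_
    refine (heq_of_eq (iso.φ_mul n 1 a b)).trans ?_
    refine ((stmt17_mul_cast_left 𝔇 e (iso.φ n a) (iso.φ 1 b)).symm).trans ?_
    rw [← heF, ← hW a]
    refine (heq_of_eq (iso.φ_mul 1 1 (W a) b).symm).trans ?_
    show HEq (iso.φ (1*1) (W a * β.α 1 b)) (iso.φ 1 (W a * b))
    rw [β.α_one]
    exact stmt17_phi_heq iso (one_mul 1) _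
  have hC2 : ∀ a b : B, W (a * b) = a * W b := by
    intro a b
    apply hinj
    rw [hW]
    have hb : a * b = a * β.α 1 b := by rw [β.α_one]
    rw [hb]
    refine eq_of_heq ?_
    refine (cast_heq eF _).trans ?_
    refine (stmt17_phi_heq iso (one_mul n).symm (a * β.α 1 b)).trans ?_
    refine (heq_of_eq (iso.φ_mul 1 n a b)).trans ?_
    refine ((stmt17_mul_cast_right 𝔇 e (iso.φ 1 a) (iso.φ n b)).symm).trans ?_
    rw [← heF, ← hW b]
    refine (heq_of_eq (iso.φ_mul 1 1 a (W b)).symm).trans ?_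
    show HEq (iso.φ (1*1) (a * β.α 1 (W b))) (iso.φ 1 (a * W b))
    rw [β.α_one]
    exact stmt17_phi_heq iso (one_mul 1) _
  exact ⟨W, hadd, hnorm, hC1, hC2⟩

/-- The heart of the matter: if the semidirect product bundle of `β` is isomorphic to a
pull-back from `G/N`, then every element of `N` stabilizes every primitive ideal of `B`. -/
private lemma stmt17_key {B : Type} [NonUnitalCStarAlgebra B]
    (β : CAction G B) (N : Subgroup G) [N.Normal] (𝔇 : FellBundle (G ⧸ N))
    (iso : FellBundleIso β.semidirect (FellBundle.pullback N 𝔇))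
    {m : G} (hm : m ∈ N) (P : Submodule ℂ B) (hP : IsPrimitive P)
    {x : B} (hx : x ∈ P) : β.α m x ∈ P := by
  obtain ⟨Hsp, π, ⟨v0, hv0⟩, hdense, hirr, hmem⟩ := hP
  obtain ⟨W, hWadd, hWnorm, hC1, hC2⟩ := stmt17_exists_W β N 𝔇 iso hm
  have hπle : ∀ b : B, ‖π b‖ ≤ ‖b‖ := fun b => NonUnitalStarAlgHom.norm_apply_le π b
  have hπc : Continuous π :=
    AddMonoidHomClass.continuous_of_bound π 1 (by simpa using fun b => hπle b)
  have hW0 : W 0 = 0 := by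
    have h := hWadd 0 0
    rw [add_zero] at h
    exact (left_eq_add.mp h)
  have hWsub : ∀ u v : B, W (u - v) = W u - W v := by
    intro u v
    have hneg : W (-v) = - W v := by
      have h := hWadd v (-v)
      rw [add_neg_cancel, hW0] at h
      exact (neg_eq_of_add_eq_zero_right h.symm).symm
    rw [sub_eq_add_neg, hWadd, hneg, sub_eq_add_neg]
  -- Lemma A: left faithfulness from irreducibility and nondegeneracy
  have lemA : ∀ y : B, (∀ a : B, π (a * y) = 0) → π y = 0 := by
    intro y hy
    set K : Submodule ℂ Hsp.carrier :=
      { carrier := {v | ∀ a : B, π a v = 0}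
        add_mem' := fun {u} {v} hu hv a => by
          rw [map_add, hu a, hv a, add_zero]
        zero_mem' := fun a => map_zero _
        smul_mem' := fun c v hv a => by
          rw [map_smul, hv a, smul_zero] } with hK
    have hKset : (K : Set Hsp.carrier) = ⋂ a : B, (π a) ⁻¹' {0} := by
      ext v
      simp only [Set.mem_iInter, Set.mem_preimage, Set.mem_singleton_iff]
      exact Iff.rfl
    have hKclosed : IsClosed (K : Set Hsp.carrier) := by
      rw [hKset]
      exact isClosed_iInter fun a => IsClosed.preimage (π a).continuous isClosed_singleton
    have hKinv : ∀ b : B, ∀ v ∈ K, π b v ∈ K := by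
      intro b v hv a
      show π a (π b v) = 0
      rw [← ContinuousLinearMap.mul_apply, ← map_mul]
      exact hv (a * b)
    rcases hirr K hKclosed hKinv with hbot | htop
    · ext v
      have hmemK : π y v ∈ K := by
        intro a
        show π a (π y v) = 0
        rw [← ContinuousLinearMap.mul_apply, ← map_mul, hy a]
        simp
      rw [hbot] at hmemK
      simpa using hmemK
    · exfalso
      have hall : ∀ (b : B) (w : Hsp.carrier), π b w = 0 := by
        intro b w
        have hw : w ∈ K := by rw [htop]; trivial
        exact hw b
      have hspan : Submodule.span ℂ {v : Hsp.carrier | ∃ (b : B) (w : Hsp.carrier),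
          v = π b w} = ⊥ := by
        refine le_bot_iff.mp (Submodule.span_le.mpr ?_)
        rintro v ⟨b, w, rfl⟩
        simp [hall]
      rw [hspan] at hdense
      have hv0mem : v0 ∈ closure ((⊥ : Submodule ℂ Hsp.carrier) : Set Hsp.carrier) :=
        hdense v0
      simp only [Submodule.bot_coe, closure_singleton, Set.mem_singleton_iff] at hv0mem
      exact hv0 hv0mem
  -- Inverse invariance: π ∘ W⁻¹ kills P
  have hINV : ∀ y : B, π (W y) = 0 → π y = 0 := by
    intro y hy
    have hsmall : ∀ ε : ℝ, 0 < ε → ‖π y‖ < ε := by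
      intro ε hε
      obtain ⟨g, hgc, hg0, hgn⟩ := stmt17_cstar_approx (W y) hε
      set q : B := cfcₙ g (W y * star (W y)) with hq
      have hsa : IsSelfAdjoint (W y * star (W y)) := by
        show star _ = _
        simp [star_mul]
      have hπq : π q = 0 := by
        rw [hq, NonUnitalStarAlgHom.map_cfcₙ (R := ℝ) π g _ hgc.continuousOn hg0 hπc hsa
          (hsa.map π), map_mul, hy]
        simp
      have h3 : ‖q * W y - W y‖ = ‖q * y - y‖ := by
        have h2 : W (q * y - y) = q * W y - W y := by rw [hWsub, hC2]
        have h4 := hWnorm (q * y - y)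
        rw [h2] at h4
        exact h4
      have h1 : ‖q * y - y‖ < ε := by rw [← h3]; exact hgn
      have h5 : π y = π (y - q * y) := by
        rw [map_sub, map_mul, hπq]
        simp
      calc ‖π y‖ = ‖π (y - q * y)‖ := by rw [h5]
      _ ≤ ‖y - q * y‖ := hπle _
      _ = ‖q * y - y‖ := by rw [norm_sub_rev]
      _ < ε := h1
    by_contra hne
    exact lt_irrefl _ (hsmall _ (norm_pos_iff.mpr hne))
  -- Conclusion
  rw [hmem]
  apply lemA
  intro a
  apply hINV
  rw [hC1 a x, map_mul, (hmem x).mp hx]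
  simp

end Stmt17Aux

/-- STATEMENT 17 (Corollary 5.8): if the stabilizers `S_P` of the primitive ideals
of `B` under an action `β` of a discrete group `G` intersect trivially, then the
dual coaction `β̂` on `B ×_β G` is not weakly induced from any nontrivial quotient
`G/N`, i.e. for no nontrivial normal subgroup `N` is the associated Fell bundle of
`β̂` (the semidirect product bundle `B × G`) isomorphic to a pull-back from `G/N`. -/
theorem stmt_17 {G : Type} [Group G] {B : Type} [NonUnitalCStarAlgebra B]
    (β : CAction G B)
    (hstab : ∀ s : G,
      (∀ P : Submodule ℂ B, IsPrimitive P → (∀ x : B, x ∈ P ↔ β.α s x ∈ P)) → s = 1)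
    (N : Subgroup G) [N.Normal] (hNbot : N ≠ ⊥) :
    ¬ ∃ 𝔇 : FellBundle (G ⧸ N),
        Nonempty (FellBundleIso β.semidirect (FellBundle.pullback N 𝔇)) := by
  rintro ⟨𝔇, ⟨iso⟩⟩
  obtain ⟨n, hn, hn1⟩ : ∃ n : G, n ∈ N ∧ n ≠ 1 := by
    by_contra h
    push_neg at h
    exact hNbot ((Subgroup.eq_bot_iff_forall N).mpr h)
  refine hn1 (hstab n fun P hP x => ?_)
  constructor
  · intro hx
    exact stmt17_key β N 𝔇 iso hn P hP hx
  · intro hx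
    have h2 := stmt17_key β N 𝔇 iso (inv_mem hn) P hP hx
    rwa [← β.α_comp, inv_mul_cancel, β.α_one] at h2
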